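/- arXiv:1511.05479 — 2 statements merged into one kernel-verified Lean document; each statement's English description precedes it below -/
import Mathlib

section
/- Let P be an ε_k-noisy sample of a compact set K in a metric space X, and let Q be the output of the Declutter algorithm on (P,k). Then the Hausdorff distance between K and Q satisfies δ_H(K, Q) ≤ 7ε_k. -/
open Metric

/-- Core loop of the Declutter algorithm: scan the (pre-sorted) list, keeping a point `p`
iff no previously kept point lies in the open ball `B(p, 2 f p)` (w.r.t. distance `d`). -/
noncomputable def declutterAux {X : Type*} (d : X → X → ℝ) (f : X → ℝ) :
    List X → List X → List X
  | Q, [] => Q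
  | Q, p :: rest =>
    if ∀ q ∈ Q, 2 * f p ≤ d p q then declutterAux d f (Q ++ [p]) rest
    else declutterAux d f Q rest

noncomputable def declutter {X : Type*} (d : X → X → ℝ) (f : X → ℝ) (L : List X) : List X :=
  declutterAux d f [] L

/-- `Q` is a possible output of the Declutter algorithm on `P`, with robust distance
function `f`: the points of `P` are processed in nondecreasing order of `f`
(ties broken arbitrarily). -/
def IsDeclutterOutput {X : Type*} (d : X → X → ℝ) (f : X → ℝ) (P : Finset X)
    (Q : List X) : Prop :=
  ∃ L : List X, L.Perm P.toList ∧ L.Pairwise (fun a b => f a ≤ f b) ∧ Q = declutter d f L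

variable {X : Type*} [MetricSpace X]

/-- Sorted (nondecreasing) list of distances from `x` to the points of `P`. -/
noncomputable def sortedDists (P : Finset X) (x : X) : List ℝ :=
  (P.val.map (dist x)).sort (· ≤ ·)

/-- The k-distance: root mean square of the distances to the k nearest neighbors in `P`. -/
noncomputable def kdist (P : Finset X) (k : ℕ) (x : X) : ℝ :=
  Real.sqrt ((1 / (k : ℝ)) * (((sortedDists P x).take k).map (fun r => r ^ 2)).sum)

/-- `P` is an ε_k-noisy sample of `K`:
(1) the k-distance is at most ε on `K`; (2) every point of the space is within
`kdist + ε` of `K`. -/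
def NoisySample (P : Finset X) (k : ℕ) (K : Set X) (ε : ℝ) : Prop :=
  (∀ x ∈ K, kdist P k x ≤ ε) ∧ ∀ x : X, infDist x K ≤ kdist P k x + ε

/-!
Writing `k · kdist(x)²` as the least sum of squared distances from `x` to `k` sample points
shows that `kdist` is 1-Lipschitz and that some sample lies within `kdist(x)` of `x`. So a
point `x ∈ K` has a sample `p` with `d(x, p) ≤ ε` and `kdist(p) ≤ 2ε`, and `p` is either kept
or discarded because of a kept point within `2 kdist(p)`: `K` lies within `5ε` of `Q`.
Conversely, since points are processed in increasing `kdist`, any two kept points `q ≠ r`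
satisfy `2 kdist(q) ≤ d(q, r)`. A kept `q` with `kdist(q) > 6ε` would then be at distance at
least `2 kdist(q) - 5ε` from every point of `K`, against `d(q, K) ≤ kdist(q) + ε`.
-/

open Finset
open scoped List

lemma List.Sublist.forall₂_take_length_le {α : Type*} [Preorder α] {l t : List α} (h : t <+ l)
    (hl : l.Pairwise (· ≤ ·)) : List.Forall₂ (· ≤ ·) (l.take t.length) t := by
  obtain ⟨e, he⟩ := List.sublist_iff_exists_orderEmbedding_getElem?_eq.mp h
  refine List.forall₂_iff_get.mpr ⟨by simp [h.length_le], fun i h₁ h₂ => ?_⟩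
  obtain ⟨hei, heq⟩ : ∃ hei : e i < l.length, l[e i] = t[i] := by
    have := he i
    rw [List.getElem?_eq_getElem h₂, eq_comm, List.getElem?_eq_some_iff] at this
    exact this
  simp only [List.get_eq_getElem, List.getElem_take, ← heq]
  rcases (e.strictMono.id_le i).eq_or_lt with hi | hi
  · simp only [id, ← hi, le_refl]
  · exact List.pairwise_iff_getElem.mp hl _ _ _ _ hi

lemma Finset.sum_add_sq_le {ι : Type*} (s : Finset ι) (a : ι → ℝ) {δ : ℝ} (hδ : 0 ≤ δ) :
    ∑ i ∈ s, (a i + δ) ^ 2 ≤ (√(∑ i ∈ s, a i ^ 2) + √(#s : ℝ) * δ) ^ 2 := by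
  have hcs : ∑ i ∈ s, a i ≤ √(∑ i ∈ s, a i ^ 2) * √(#s : ℝ) := by
    simpa using Real.sum_mul_le_sqrt_mul_sqrt s a 1
  have hexp : ∑ i ∈ s, (a i + δ) ^ 2 = ∑ i ∈ s, a i ^ 2 + 2 * δ * ∑ i ∈ s, a i + #s * δ ^ 2 := by
    simp only [add_sq, sum_add_distrib, sum_const, nsmul_eq_mul, ← sum_mul, ← mul_sum]
    ring
  rw [hexp, add_sq, mul_pow, Real.sq_sqrt (by positivity), Real.sq_sqrt (by positivity)]
  nlinarith

lemma natCast_mul_kdist_sq (P : Finset X) (k : ℕ) (x : X) :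
    (k : ℝ) * kdist P k x ^ 2 = (((sortedDists P x).take k).map (· ^ 2)).sum := by
  have hsum : 0 ≤ (((sortedDists P x).take k).map (· ^ 2)).sum :=
    List.sum_nonneg fun r hr => by
      obtain ⟨a, -, rfl⟩ := List.mem_map.mp hr
      positivity
  rw [kdist, Real.sq_sqrt (by positivity)]
  rcases eq_or_ne k 0 with rfl | hk
  · simp
  · field_simp

lemma sortedDists_perm (P : Finset X) (x : X) : sortedDists P x ~ P.toList.map (dist x) := by
  rw [← Multiset.coe_eq_coe, sortedDists, Multiset.sort_eq, ← Multiset.map_coe, Finset.coe_toList]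

lemma sum_map_sq_sortedDists (P : Finset X) (x : X) :
    ((sortedDists P x).map (· ^ 2)).sum = ∑ t ∈ P, dist x t ^ 2 := by
  rw [((sortedDists_perm P x).map _).sum_eq, List.map_map, ← sum_map_toList]
  rfl

lemma nonneg_of_mem_sortedDists {P : Finset X} {x : X} {r : ℝ} (hr : r ∈ sortedDists P x) :
    0 ≤ r := by
  obtain ⟨t, -, rfl⟩ := List.mem_map.mp ((sortedDists_perm P x).subset hr)
  exact dist_nonneg

lemma natCast_mul_kdist_sq_le_sum {P F : Finset X} {k : ℕ} (hF : F ⊆ P) (hFk : #F = k) (x : X) :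
    (k : ℝ) * kdist P k x ^ 2 ≤ ∑ t ∈ F, dist x t ^ 2 := by
  have hsub : sortedDists F x <+ sortedDists P x := by
    refine List.sublist_of_subperm_of_pairwise ?_ (Multiset.pairwise_sort _ _)
      (Multiset.pairwise_sort _ _)
    rw [← Multiset.coe_le, sortedDists, sortedDists, Multiset.sort_eq, Multiset.sort_eq]
    exact Multiset.map_le_map (Finset.val_le_iff.mpr hF)
  have hlen : (sortedDists F x).length = k := by simp [sortedDists, hFk]
  have hdom := hsub.forall₂_take_length_le (Multiset.pairwise_sort _ _)
  rw [hlen] at hdom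
  have hsq : List.Forall₂ (· ≤ ·) (((sortedDists P x).take k).map (· ^ 2))
      ((sortedDists F x).map (· ^ 2)) := by
    rw [List.forall₂_map_left_iff, List.forall₂_map_right_iff]
    refine ((List.forall₂_and_left _ _).mpr ⟨fun r hr => ?_, hdom⟩).imp
      fun a b h => pow_le_pow_left₀ h.1 h.2 2
    exact nonneg_of_mem_sortedDists (List.mem_of_mem_take hr)
  rw [natCast_mul_kdist_sq, ← sum_map_sq_sortedDists]
  exact hsq.sum_le_sum

lemma exists_sum_eq_natCast_mul_kdist_sq (P : Finset X) {k : ℕ} (hkP : k ≤ #P) (x : X) :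
    ∃ F ⊆ P, #F = k ∧ ∑ t ∈ F, dist x t ^ 2 = k * kdist P k x ^ 2 := by
  classical
  obtain ⟨l, hperm, hsub⟩ :=
    (List.take_sublist k _).subperm.trans (sortedDists_perm P x).subperm
  obtain ⟨F, hF, rfl⟩ := List.sublist_map_iff.mp hsub
  have hnodup : F.Nodup := P.nodup_toList.sublist hF
  refine ⟨F.toFinset, fun t ht => ?_, ?_, ?_⟩
  · simpa using hF.subset (List.mem_toFinset.mp ht)
  · rw [List.toFinset_card_of_nodup hnodup, ← List.length_map, hperm.length_eq]
    simp [sortedDists, hkP]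
  · rw [natCast_mul_kdist_sq, List.sum_toFinset _ hnodup, ← (hperm.map _).sum_eq, List.map_map]
    rfl

lemma kdist_nonneg (P : Finset X) (k : ℕ) (x : X) : 0 ≤ kdist P k x := Real.sqrt_nonneg _

lemma exists_dist_le_kdist (P : Finset X) {k : ℕ} (hk : 1 ≤ k) (hkP : k ≤ #P) (x : X) :
    ∃ p ∈ P, dist x p ≤ kdist P k x := by
  obtain ⟨F, hFP, hFk, hF⟩ := exists_sum_eq_natCast_mul_kdist_sq P hkP x
  obtain ⟨p, hpF, hp⟩ := F.exists_min_image (dist x) (card_pos.mp (hFk ▸ hk))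
  refine ⟨p, hFP hpF, (pow_le_pow_iff_left₀ dist_nonneg (kdist_nonneg P k x) two_ne_zero).mp ?_⟩
  have hsum : (k : ℝ) * dist x p ^ 2 ≤ k * kdist P k x ^ 2 := by
    rw [← hF, ← hFk, ← nsmul_eq_mul]
    exact card_nsmul_le_sum F _ _ fun t ht => pow_le_pow_left₀ dist_nonneg (hp t ht) 2
  exact le_of_mul_le_mul_left hsum (by positivity)

lemma kdist_le_kdist_add_dist (P : Finset X) {k : ℕ} (hkP : k ≤ #P) (x y : X) :
    kdist P k y ≤ kdist P k x + dist x y := by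
  rcases Nat.eq_zero_or_pos k with rfl | hk
  · simp [kdist]
  obtain ⟨F, hFP, hFk, hF⟩ := exists_sum_eq_natCast_mul_kdist_sq P hkP x
  have hsq : (k : ℝ) * kdist P k y ^ 2 ≤ k * (kdist P k x + dist x y) ^ 2 :=
    calc (k : ℝ) * kdist P k y ^ 2
        ≤ ∑ t ∈ F, dist y t ^ 2 := natCast_mul_kdist_sq_le_sum hFP hFk y
      _ ≤ ∑ t ∈ F, (dist x t + dist x y) ^ 2 := by
        refine sum_le_sum fun t _ => pow_le_pow_left₀ dist_nonneg ?_ 2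
        linarith [dist_triangle_left y t x]
      _ ≤ (√(∑ t ∈ F, dist x t ^ 2) + √(#F : ℝ) * dist x y) ^ 2 := sum_add_sq_le F _ dist_nonneg
      _ = k * (kdist P k x + dist x y) ^ 2 := by
        rw [hF, hFk, Real.sqrt_mul (Nat.cast_nonneg k), Real.sqrt_sq (kdist_nonneg P k x),
          ← mul_add, mul_pow, Real.sq_sqrt (Nat.cast_nonneg k)]
  refine (pow_le_pow_iff_left₀ (kdist_nonneg P k y) ?_ two_ne_zero).mp
    (le_of_mul_le_mul_left hsq (by exact_mod_cast hk))
  exact add_nonneg (kdist_nonneg P k x) dist_nonneg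

section DeclutterLoop

variable {α : Type*} (d : α → α → ℝ) (f : α → ℝ)

lemma declutterAux_eq_append (Q L : List α) : ∃ S, S <+ L ∧ declutterAux d f Q L = Q ++ S := by
  induction L generalizing Q with
  | nil => exact ⟨[], List.Sublist.slnil, by simp [declutterAux]⟩
  | cons p L ih =>
    by_cases hp : ∀ q ∈ Q, 2 * f p ≤ d p q
    · obtain ⟨S, hS, hQS⟩ := ih (Q ++ [p])
      refine ⟨p :: S, hS.cons_cons p, ?_⟩
      simp only [declutterAux, if_pos hp, hQS, List.append_assoc, List.singleton_append]
    · obtain ⟨S, hS, hQS⟩ := ih Q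
      exact ⟨S, hS.cons p, by simp only [declutterAux, if_neg hp, hQS]⟩

lemma subset_declutterAux (Q L : List α) : Q ⊆ declutterAux d f Q L := by
  obtain ⟨S, -, hQS⟩ := declutterAux_eq_append d f Q L
  exact hQS ▸ List.subset_append_left Q S

lemma pairwise_declutterAux {Q : List α} (hQ : Q.Pairwise fun q p => 2 * f p ≤ d p q)
    (L : List α) : (declutterAux d f Q L).Pairwise fun q p => 2 * f p ≤ d p q := by
  induction L generalizing Q with
  | nil => simpa [declutterAux] using hQ
  | cons p L ih =>
    by_cases hp : ∀ q ∈ Q, 2 * f p ≤ d p q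
    · simp only [declutterAux, if_pos hp]
      exact ih (List.pairwise_append.mpr ⟨hQ, List.pairwise_singleton _ _,
        fun q hq p' hp' => List.eq_of_mem_singleton hp' ▸ hp q hq⟩)
    · simpa only [declutterAux, if_neg hp] using ih hQ

lemma exists_mem_declutterAux (Q : List α) {L : List α} {p : α} (hp : p ∈ L) :
    ∃ q ∈ declutterAux d f Q L, q = p ∨ d p q < 2 * f p := by
  induction L generalizing Q with
  | nil => simp at hp
  | cons p' L ih =>
    by_cases hkeep : ∀ q ∈ Q, 2 * f p' ≤ d p' q
    · simp only [declutterAux, if_pos hkeep]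
      rcases List.mem_cons.mp hp with rfl | hp
      · exact ⟨p, subset_declutterAux d f _ L (by simp), Or.inl rfl⟩
      · exact ih _ hp
    · simp only [declutterAux, if_neg hkeep]
      rcases List.mem_cons.mp hp with rfl | hp
      · push Not at hkeep
        obtain ⟨q, hq, hpq⟩ := hkeep
        exact ⟨q, subset_declutterAux d f Q L hq, Or.inr hpq⟩
      · exact ih Q hp

lemma declutter_sublist (L : List α) : declutter d f L <+ L := by
  obtain ⟨S, hS, hQS⟩ := declutterAux_eq_append d f [] L
  rw [declutter, hQS, List.nil_append]
  exact hS

lemma pairwise_declutter (L : List α) :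
    (declutter d f L).Pairwise fun q p => 2 * f p ≤ d p q :=
  pairwise_declutterAux d f List.Pairwise.nil L

lemma exists_mem_declutter {L : List α} {p : α} (hp : p ∈ L) :
    ∃ q ∈ declutter d f L, q = p ∨ d p q < 2 * f p :=
  exists_mem_declutterAux d f [] hp

end DeclutterLoop

lemma IsDeclutterOutput.two_mul_le_dist {f : X → ℝ} {P : Finset X} {Q : List X}
    (hQ : IsDeclutterOutput (fun a b => dist a b) f P Q) {q r : X} (hq : q ∈ Q) (hr : r ∈ Q)
    (hqr : q ≠ r) : 2 * f q ≤ dist q r := by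
  obtain ⟨L, -, hsorted, rfl⟩ := hQ
  have hpair : (declutter (fun a b => dist a b) f L).Pairwise
      fun a b => 2 * f a ≤ dist a b ∧ 2 * f b ≤ dist a b :=
    ((pairwise_declutter _ f L).and (hsorted.sublist (declutter_sublist _ f L))).imp
      fun ⟨hsep, hle⟩ => ⟨by rw [dist_comm]; linarith, by rwa [dist_comm]⟩
  have : Std.Symm fun a b : X => 2 * f a ≤ dist a b ∧ 2 * f b ≤ dist a b :=
    ⟨fun a b h => by rw [dist_comm]; exact h.symm⟩
  exact (hpair.forall hq hr hqr).1

lemma IsDeclutterOutput.exists_dist_le {f : X → ℝ} {P : Finset X} {Q : List X}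
    (hQ : IsDeclutterOutput (fun a b => dist a b) f P Q) {p : X} (hp : p ∈ P) (hfp : 0 ≤ f p) :
    ∃ r ∈ Q, dist p r ≤ 2 * f p := by
  obtain ⟨L, hperm, -, rfl⟩ := hQ
  obtain ⟨r, hr, rfl | hpr⟩ := exists_mem_declutter _ f (hperm.mem_iff.mpr (mem_toList.mpr hp))
  · exact ⟨r, hr, by simpa using hfp⟩
  · exact ⟨r, hr, hpr.le⟩

namespace NoisySample

variable {P : Finset X} {k : ℕ} {K : Set X} {ε : ℝ} {Q : List X}

lemma exists_mem_output_dist_le (hs : NoisySample P k K ε) (hk : 1 ≤ k) (hkP : k ≤ #P)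
    (hQ : IsDeclutterOutput (fun a b => dist a b) (kdist P k) P Q) {x : X} (hx : x ∈ K) :
    ∃ r ∈ Q, dist x r ≤ 5 * ε := by
  obtain ⟨p, hp, hxp⟩ := exists_dist_le_kdist P hk hkP x
  obtain ⟨r, hr, hpr⟩ := hQ.exists_dist_le hp (kdist_nonneg P k p)
  have hfx := hs.1 x hx
  have hfp := kdist_le_kdist_add_dist P hkP x p
  exact ⟨r, hr, by linarith [dist_triangle x p r]⟩

lemma kdist_le_of_mem_output (hs : NoisySample P k K ε) (hk : 1 ≤ k) (hkP : k ≤ #P)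
    (hK : K.Nonempty) (hQ : IsDeclutterOutput (fun a b => dist a b) (kdist P k) P Q) {q : X}
    (hq : q ∈ Q) :
    kdist P k q ≤ 6 * ε := by
  by_contra! hlarge
  have hfar : ∀ x ∈ K, 2 * kdist P k q - 5 * ε ≤ dist q x := by
    intro x hx
    obtain ⟨r, hr, hxr⟩ := hs.exists_mem_output_dist_le hk hkP hQ hx
    rcases eq_or_ne q r with rfl | hqr
    · linarith [hs.1 x hx, kdist_le_kdist_add_dist P hkP x q, dist_comm q x]
    · linarith [hQ.two_mul_le_dist hq hr hqr, dist_triangle q x r]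
  linarith [(le_infDist hK).mpr hfar, hs.2 q]

end NoisySample

theorem declutter_hausdorff_general (P : Finset X) (k : ℕ) (hk : 1 ≤ k)
    (hkP : k ≤ P.card) (K : Set X) (hKne : K.Nonempty)
    (ε : ℝ) (hsample : NoisySample P k K ε)
    (Q : List X) (hQ : IsDeclutterOutput (fun a b => dist a b) (kdist P k) P Q) :
    hausdorffDist K {x | x ∈ Q} ≤ 7 * ε := by
  obtain ⟨x₀, hx₀⟩ := hKne
  have hε : 0 ≤ ε := (kdist_nonneg P k x₀).trans (hsample.1 x₀ hx₀)
  refine hausdorffDist_le_of_infDist (by positivity) (fun x hx => ?_) (fun q hq => ?_)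
  · obtain ⟨r, hr, hxr⟩ := hsample.exists_mem_output_dist_le hk hkP hQ hx
    exact (infDist_le_dist_of_mem (s := {x | x ∈ Q}) hr).trans (by linarith)
  · linarith [hsample.2 q, hsample.kdist_le_of_mem_output hk hkP ⟨x₀, hx₀⟩ hQ hq]

/-- Hausdorff-distance guarantee for the Declutter algorithm. -/
theorem declutter_hausdorff (P : Finset X) (k : ℕ) (hk : 1 ≤ k)
    (hkP : k ≤ P.card) (K : Set X) (hK : IsCompact K) (hKne : K.Nonempty)
    (ε : ℝ) (hsample : NoisySample P k K ε)
    (Q : List X) (hQ : IsDeclutterOutput (fun a b => dist a b) (kdist P k) P Q) :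
    hausdorffDist K {x | x ∈ Q} ≤ 7 * ε :=
  declutter_hausdorff_general P k hk hkP K hKne ε hsample Q hQ
end

section
/- Let P be a weak (ε_{2k}, 2)-uniform noisy sample of K, and suppose that for some k' ≤ k, P is also a (ε_{k'}, c)-uniform noisy sample of K. Then after one declutter-resample step with parameter 2k and resampling constant C = 10 + 2√2 (i.e. P' = P ∩ ⋃_{q∈Q} B(q, C d_{P,2k}(q)) where Q = Declutter(P, 2k)), the set P' is still a (ε_{k'}, c)-uniform noisy sample of K. -/
/-!
Declutter leaves every point `p` of `P` within `2 d_{P,2k}(p)` of a kept point `q`, and weak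
uniformity gives `d_{P,2k}(q) ≥ ε_{2k}/2`. For `x ∈ K`, each of its `k' ≤ k` nearest neighbours
`p` satisfies `d(x, p) ≤ √2 d_{P,2k}(x) ≤ √2 ε_{2k}`, so by the 1-Lipschitz property of
`d_{P,2k}` we get `d(p, q) ≤ 2 (1 + √2) ε_{2k} ≤ 4 (1 + √2) d_{P,2k}(q) ≤ C d_{P,2k}(q)`
with `C = 10 + 2√2`: all of them survive the resampling, and `d_{P',k'} = d_{P,k'}` on `K`.
The other two conditions pass to `P' ⊆ P` because removing points can only increase the
`k'`-distance.
-/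

open Metric

variable {X : Type*} [MetricSpace X]

theorem List.Sublist.getElem_le_of_pairwise {α : Type*} [Preorder α] {l₁ l₂ : List α}
    (h : l₁.Sublist l₂) (hl₂ : l₂.Pairwise (· ≤ ·)) (i : ℕ) (hi : i < l₁.length) :
    l₂[i]'(hi.trans_le h.length_le) ≤ l₁[i] := by
  induction h generalizing i with
  | slnil => simp at hi
  | @cons l₁ l₂ a h ih =>
    have hi₂ : i < l₂.length := hi.trans_le h.length_le
    calc (a :: l₂)[i]'(by simp; omega) ≤ (a :: l₂)[i + 1]'(by simpa using hi₂) :=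
          hl₂.rel_get_of_le (a := ⟨i, by simp; omega⟩) (b := ⟨i + 1, by simpa using hi₂⟩) (by simp)
      _ ≤ l₁[i] := ih hl₂.of_cons i hi
  | cons_cons a h ih =>
    cases i with
    | zero => simp
    | succ j => simpa using ih hl₂.of_cons j (by simpa using hi)

theorem Multiset.sum_map_take_sort_le {u t : Multiset ℝ} (h : u ≤ t) {g : ℝ → ℝ}
    (hg : MonotoneOn g {a | a ∈ t}) :
    (((t.sort (· ≤ ·)).take u.card).map g).sum ≤ (u.map g).sum := by
  have hsub : (u.sort (· ≤ ·)).Sublist (t.sort (· ≤ ·)) :=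
    List.sublist_of_subperm_of_pairwise (by rwa [← Multiset.coe_le, sort_eq, sort_eq])
      (pairwise_sort _ _) (pairwise_sort _ _)
  rw [← u.sort_eq (· ≤ ·), coe_card, map_coe, sum_coe]
  refine List.Forall₂.sum_le_sum (List.forall₂_iff_get.2 ⟨by simpa using card_le_card h, ?_⟩)
  intro i hi₁ hi₂
  simp only [List.get_eq_getElem, List.getElem_map, List.getElem_take]
  refine hg ?_ ?_ (hsub.getElem_le_of_pairwise (pairwise_sort _ _) i (by simpa using hi₂))
  · simpa using List.getElem_mem (l := t.sort (· ≤ ·)) _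
  · simpa using hsub.subset (List.getElem_mem (l := u.sort (· ≤ ·)) _)

theorem Multiset.exists_le_map_eq_of_le_map {α β : Type*} [DecidableEq β] (f : α → β)
    {s : Multiset α} {t : Multiset β} (h : t ≤ s.map f) : ∃ u ≤ s, u.map f = t := by
  induction s using Multiset.induction_on generalizing t with
  | empty => exact ⟨0, le_rfl, (le_zero.1 h).symm⟩
  | cons a s ih =>
    rw [map_cons] at h
    by_cases hat : f a ∈ t
    · obtain ⟨u, hus, hu⟩ := ih (erase_le_iff_le_cons.2 h)
      exact ⟨a ::ₘ u, cons_le_cons a hus, by rw [map_cons, hu, cons_erase hat]⟩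
    · obtain ⟨u, hus, hu⟩ := ih ((le_cons_of_notMem hat).1 h)
      exact ⟨u, hus.trans (le_cons_self s a), hu⟩

section Declutter

variable {α : Type*} (d : α → α → ℝ) (f : α → ℝ)

theorem mem_declutterAux_of_mem {q : α} :
    ∀ {Q : List α} (rest : List α), q ∈ Q → q ∈ declutterAux d f Q rest
  | _, [], hq => by simpa [declutterAux] using hq
  | _, p :: rest, hq => by
    rw [declutterAux]
    split_ifs
    exacts [mem_declutterAux_of_mem rest (List.mem_append_left _ hq),
      mem_declutterAux_of_mem rest hq]

theorem mem_or_mem_of_mem_declutterAux {q : α} :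
    ∀ {Q rest : List α}, q ∈ declutterAux d f Q rest → q ∈ Q ∨ q ∈ rest
  | _, [], hq => Or.inl (by simpa [declutterAux] using hq)
  | Q, p :: rest, hq => by
    rw [declutterAux] at hq
    split_ifs at hq
    · simpa [or_assoc] using mem_or_mem_of_mem_declutterAux hq
    · exact (mem_or_mem_of_mem_declutterAux hq).imp_right (List.mem_cons_of_mem p)

theorem exists_mem_declutterAux_le (hd : ∀ p, d p p ≤ 2 * f p) {p : α} :
    ∀ {Q rest : List α}, p ∈ rest → ∃ q ∈ declutterAux d f Q rest, d p q ≤ 2 * f p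
  | _, [], hp => by simp at hp
  | Q, p' :: rest, hp => by
    rw [declutterAux]
    rcases List.mem_cons.1 hp with rfl | hp
    · split_ifs with hkeep
      · exact ⟨p, mem_declutterAux_of_mem d f rest (by simp), hd p⟩
      · push Not at hkeep
        obtain ⟨q, hq, hpq⟩ := hkeep
        exact ⟨q, mem_declutterAux_of_mem d f rest hq, hpq.le⟩
    · split_ifs <;> exact exists_mem_declutterAux_le hd hp

variable {d f} {P : Finset α} {Q : List α}

theorem IsDeclutterOutput.mem_of_mem (hQ : IsDeclutterOutput d f P Q) {q : α} (hq : q ∈ Q) :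
    q ∈ P := by
  obtain ⟨L, hLP, -, rfl⟩ := hQ
  rcases mem_or_mem_of_mem_declutterAux d f hq with h | h
  · simp at h
  · simpa using hLP.mem_iff.1 h

theorem IsDeclutterOutput.exists_le (hQ : IsDeclutterOutput d f P Q)
    (hd : ∀ p, d p p ≤ 2 * f p) {p : α} (hp : p ∈ P) : ∃ q ∈ Q, d p q ≤ 2 * f p := by
  obtain ⟨L, hLP, -, rfl⟩ := hQ
  exact exists_mem_declutterAux_le d f hd (hLP.mem_iff.2 (by simpa using hp))

end Declutter

noncomputable def rmsDist (S : Finset X) (x : X) : ℝ :=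
  Real.sqrt ((1 / (S.card : ℝ)) * ∑ q ∈ S, dist x q ^ 2)

theorem rmsDist_le_add (S : Finset X) (x y : X) : rmsDist S y ≤ rmsDist S x + dist x y := by
  rcases S.eq_empty_or_nonempty with rfl | hS
  · simp [rmsDist]
  set A := rmsDist S x with hA_def
  set δ := dist x y
  have hm : (0 : ℝ) < S.card := by exact_mod_cast hS.card_pos
  have hA : 0 ≤ A := Real.sqrt_nonneg _
  have hsq : ∑ q ∈ S, dist x q ^ 2 = S.card * A ^ 2 := by
    rw [hA_def, rmsDist, Real.sq_sqrt (by positivity)]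
    field_simp
  have hmean : ∑ q ∈ S, dist x q ≤ S.card * A := by
    refine abs_le_of_sq_le_sq' ?_ (by positivity) |>.2
    calc (∑ q ∈ S, dist x q) ^ 2 ≤ S.card * ∑ q ∈ S, dist x q ^ 2 := sq_sum_le_card_mul_sum_sq
      _ = (S.card * A) ^ 2 := by rw [hsq]; ring
  have hsum : ∑ q ∈ S, dist y q ^ 2 ≤ S.card * (A + δ) ^ 2 :=
    calc ∑ q ∈ S, dist y q ^ 2 ≤ ∑ q ∈ S, (dist x q + δ) ^ 2 := by
          gcongr with q
          linarith [dist_triangle_left y q x]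
      _ = ∑ q ∈ S, dist x q ^ 2 + 2 * δ * ∑ q ∈ S, dist x q + S.card * δ ^ 2 := by
          simp only [add_sq, Finset.sum_add_distrib, Finset.mul_sum, Finset.sum_const,
            nsmul_eq_mul, mul_right_comm _ (dist x _)]
      _ ≤ S.card * A ^ 2 + 2 * δ * (S.card * A) + S.card * δ ^ 2 := by
          rw [hsq]; gcongr
      _ = S.card * (A + δ) ^ 2 := by ring
  calc rmsDist S y ≤ Real.sqrt ((A + δ) ^ 2) := by
        unfold rmsDist
        gcongr
        rw [div_mul_eq_mul_div, one_mul, div_le_iff₀ hm]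
        linarith
    _ = A + δ := Real.sqrt_sq (by positivity)

theorem kdist_le_rmsDist {P S : Finset X} (hSP : S ⊆ P) (x : X) :
    kdist P S.card x ≤ rmsDist S x := by
  unfold kdist rmsDist sortedDists
  gcongr
  have hSP' : S.val.map (dist x) ≤ P.val.map (dist x) :=
    Multiset.map_le_map (Finset.val_le_iff.2 hSP)
  have h := Multiset.sum_map_take_sort_le hSP' (g := fun r : ℝ => r ^ 2) fun a ha b _ hab => by
      obtain ⟨p, -, rfl⟩ := Multiset.mem_map.1 ha
      exact pow_le_pow_left₀ (dist_nonneg (x := x)) hab 2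
  rw [Multiset.card_map, Multiset.map_map] at h
  exact h

theorem exists_kdist_eq_rmsDist {P : Finset X} {m : ℕ} (hm : m ≤ P.card) (x : X) :
    ∃ S ⊆ P, S.card = m ∧ kdist P m x = rmsDist S x ∧
      ∀ q ∈ S, dist x q ∈ (sortedDists P x).take m := by
  classical
  have htake : (((sortedDists P x).take m : List ℝ) : Multiset ℝ) ≤ P.val.map (dist x) := by
    rw [← Multiset.sort_eq (P.val.map (dist x)) (· ≤ ·), Multiset.coe_le]
    exact (List.take_sublist _ _).subperm
  obtain ⟨u, huP, hu⟩ := Multiset.exists_le_map_eq_of_le_map (dist x) htake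
  let S : Finset X := ⟨u, Multiset.nodup_of_le huP P.nodup⟩
  have hS : S.card = m := by
    rw [Finset.card_mk, ← Multiset.card_map (dist x), hu, Multiset.coe_card, List.length_take,
      sortedDists, Multiset.length_sort, Multiset.card_map]
    exact min_eq_left hm
  refine ⟨S, fun q hq => Multiset.mem_of_le huP hq, hS, ?_, fun q hq => ?_⟩
  · rw [kdist, rmsDist, hS, Finset.sum, ← Function.comp_def (· ^ 2) (dist x), ← Multiset.map_map]
    simp [S, hu]
  · have := Multiset.mem_map_of_mem (dist x) hq
    rwa [hu, Multiset.mem_coe] at this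

theorem kdist_le_kdist_of_subset {P P' : Finset X} (hP'P : P' ⊆ P) {m : ℕ} (hm : m ≤ P'.card)
    (x : X) : kdist P m x ≤ kdist P' m x := by
  obtain ⟨S, hSP', rfl, hS, -⟩ := exists_kdist_eq_rmsDist hm x
  exact hS ▸ kdist_le_rmsDist (hSP'.trans hP'P) x

theorem lipschitzWith_kdist {P : Finset X} {m : ℕ} (hm : m ≤ P.card) :
    LipschitzWith 1 (kdist P m) :=
  LipschitzWith.of_le_add fun y x => by
    obtain ⟨S, hSP, rfl, hS, -⟩ := exists_kdist_eq_rmsDist hm x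
    calc kdist P S.card y ≤ rmsDist S y := kdist_le_rmsDist hSP y
      _ ≤ rmsDist S x + dist x y := rmsDist_le_add S x y
      _ = kdist P S.card x + dist y x := by rw [hS, dist_comm]

/-- Each of the `k` smallest distances is dominated by the next `k` ones, which enter the
`2k`-distance. -/
theorem le_sqrt_two_mul_kdist {P : Finset X} {k : ℕ} (hkP : 2 * k ≤ P.card) {x : X} {a : ℝ}
    (ha : a ∈ (sortedDists P x).take k) : a ≤ Real.sqrt 2 * kdist P (2 * k) x := by
  set s := sortedDists P x
  rcases k.eq_zero_or_pos with rfl | hk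
  · simp at ha
  have ha0 : 0 ≤ a := by
    obtain ⟨p, -, rfl⟩ := Multiset.mem_map.1 ((Multiset.mem_sort _).1 (List.mem_of_mem_take ha))
    exact dist_nonneg
  have hnext : ∀ b ∈ (s.drop k).take k, a ≤ b := by
    have hs : (s.take k ++ s.drop k).Pairwise (· ≤ ·) := by
      rw [List.take_append_drop]
      exact Multiset.pairwise_sort _ _
    exact fun b hb => (List.pairwise_append.1 hs).2.2 a ha b (List.mem_of_mem_take hb)
  have hlen : ((s.drop k).take k).length = k := by
    simp only [List.length_take, List.length_drop, s, sortedDists, Multiset.length_sort,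
      Multiset.card_map, Finset.card_val]
    omega
  have hsum : k * a ^ 2 ≤ ((s.take (2 * k)).map (· ^ 2)).sum :=
    calc k * a ^ 2 ≤ (((s.drop k).take k).map (· ^ 2)).sum := by
          have h := List.card_nsmul_le_sum _ _ fun r hr => by
            obtain ⟨b, hb, rfl⟩ := List.mem_map.1 hr
            exact pow_le_pow_left₀ ha0 (hnext b hb) 2
          rwa [List.length_map, hlen, nsmul_eq_mul] at h
      _ ≤ ((s.take k).map (· ^ 2)).sum + (((s.drop k).take k).map (· ^ 2)).sum :=
          le_add_of_nonneg_left (List.sum_nonneg fun r hr => by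
            obtain ⟨b, -, rfl⟩ := List.mem_map.1 hr
            positivity)
      _ = ((s.take (2 * k)).map (· ^ 2)).sum := by
          rw [two_mul, List.take_add, List.map_append, List.sum_append]
  calc a ≤ Real.sqrt (2 * ((1 / (2 * k : ℕ) : ℝ) * ((s.take (2 * k)).map (· ^ 2)).sum)) := by
        refine Real.le_sqrt_of_sq_le ?_
        have hk' : (0 : ℝ) < k := by exact_mod_cast hk
        push_cast
        field_simp
        linarith
    _ = Real.sqrt 2 * kdist P (2 * k) x := by rw [Real.sqrt_mul zero_le_two, kdist]

theorem IsDeclutterOutput.exists_dist_le_of_near {f : X → ℝ} (hf : LipschitzWith 1 f)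
    (hf₀ : ∀ y, 0 ≤ f y) {P : Finset X} {Q : List X}
    (hQ : IsDeclutterOutput (fun a b => dist a b) f P Q) {ε : ℝ} (hPε : ∀ p ∈ P, ε / 2 ≤ f p)
    {C : ℝ} (hC : 4 * (1 + Real.sqrt 2) ≤ C) {x p : X} (hx : f x ≤ ε) (hp : p ∈ P)
    (hxp : dist x p ≤ Real.sqrt 2 * ε) : ∃ q ∈ Q, dist p q ≤ C * f q := by
  obtain ⟨q, hq, hpq⟩ := hQ.exists_le (fun y => by simpa using hf₀ y) hp
  refine ⟨q, hq, ?_⟩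
  have hfp : f p ≤ f x + dist p x := by simpa using hf.le_add_mul p x
  calc dist p q ≤ 2 * f p := hpq
    _ ≤ 4 * (1 + Real.sqrt 2) * (ε / 2) := by rw [dist_comm] at hfp; linarith
    _ ≤ 4 * (1 + Real.sqrt 2) * f q := by gcongr; exact hPε q (hQ.mem_of_mem hq)
    _ ≤ C * f q := by gcongr; exact hf₀ q

open scoped Classical in
theorem resample_preserves_sampling_general (P : Finset X) (k k' : ℕ)
    (hk'k : k' ≤ k) (hkP : 2 * k ≤ P.card)
    (K : Set X) (hKne : K.Nonempty)
    (ε2k ε' c : ℝ)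
    -- P is a weak (ε_{2k}, 2)-uniform noisy sample of K:
    (hweak1 : ∀ x ∈ K, kdist P (2 * k) x ≤ ε2k)
    (hweak3 : ∀ p ∈ P, ε2k / 2 ≤ kdist P (2 * k) p)
    -- P is a (ε_{k'}, c)-uniform noisy sample of K:
    (hkp1 : NoisySample P k' K ε')
    (hkp3 : ∀ p ∈ P, ε' / c ≤ kdist P k' p)
    (Q : List X)
    (hQ : IsDeclutterOutput (fun a b => dist a b) (kdist P (2 * k)) P Q)
    (P' : Finset X)
    (hP' : P' = P.filter
      (fun p => ∃ q ∈ Q, dist p q ≤ (10 + 2 * Real.sqrt 2) * kdist P (2 * k) q)) :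
    NoisySample P' k' K ε' ∧ ∀ p ∈ P', ε' / c ≤ kdist P' k' p := by
  have hP'P : P' ⊆ P := hP' ▸ Finset.filter_subset _ _
  have hnear : ∀ x ∈ K, ∃ S ⊆ P', S.card = k' ∧ kdist P k' x = rmsDist S x := by
    intro x hx
    obtain ⟨S, hSP, hS, hkx, hSnear⟩ := exists_kdist_eq_rmsDist (P := P) (m := k') (by omega) x
    refine ⟨S, fun p hp => ?_, hS, hkx⟩
    have hxp : dist x p ≤ Real.sqrt 2 * ε2k :=
      (le_sqrt_two_mul_kdist hkP (List.take_subset_take_left _ hk'k (hSnear p hp))).trans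
        (by gcongr; exact hweak1 x hx)
    rw [hP', Finset.mem_filter]
    exact ⟨hSP hp, hQ.exists_dist_le_of_near (lipschitzWith_kdist hkP) (fun _ => Real.sqrt_nonneg _)
      hweak3 (by linarith [Real.sqrt_two_lt_three_halves]) (hweak1 x hx) (hSP hp) hxp⟩
  obtain ⟨x₀, hx₀⟩ := hKne
  obtain ⟨S₀, hS₀P', hS₀, -⟩ := hnear x₀ hx₀
  have hmono : ∀ y, kdist P k' y ≤ kdist P' k' y :=
    kdist_le_kdist_of_subset hP'P (hS₀ ▸ Finset.card_le_card hS₀P')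
  refine ⟨⟨fun x hx => ?_, fun y => (hkp1.2 y).trans (by linarith [hmono y])⟩,
    fun p hp => (hkp3 p (hP'P hp)).trans (hmono p)⟩
  obtain ⟨S, hSP', rfl, hS⟩ := hnear x hx
  calc kdist P' S.card x ≤ rmsDist S x := kdist_le_rmsDist hSP' x
    _ = kdist P S.card x := hS.symm
    _ ≤ ε' := hkp1.1 x hx

open scoped Classical in
/-- One declutter-resample step with parameter 2k (and resampling constant C = 10+2√2)
preserves the (ε_{k'}, c)-uniform noisy sample condition for any k' ≤ k, provided P is a
weak (ε_{2k}, 2)-uniform noisy sample of K. -/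
theorem resample_preserves_sampling (P : Finset X) (k k' : ℕ) (hk : 1 ≤ k')
    (hk'k : k' ≤ k) (hkP : 2 * k ≤ P.card)
    (K : Set X) (hK : IsCompact K) (hKne : K.Nonempty)
    (ε2k ε' c : ℝ) (hc : 0 < c)
    -- P is a weak (ε_{2k}, 2)-uniform noisy sample of K:
    (hweak1 : ∀ x ∈ K, kdist P (2 * k) x ≤ ε2k)
    (hweak3 : ∀ p ∈ P, ε2k / 2 ≤ kdist P (2 * k) p)
    -- P is a (ε_{k'}, c)-uniform noisy sample of K:
    (hkp1 : NoisySample P k' K ε')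
    (hkp3 : ∀ p ∈ P, ε' / c ≤ kdist P k' p)
    (Q : List X)
    (hQ : IsDeclutterOutput (fun a b => dist a b) (kdist P (2 * k)) P Q)
    (P' : Finset X)
    (hP' : P' = P.filter
      (fun p => ∃ q ∈ Q, dist p q ≤ (10 + 2 * Real.sqrt 2) * kdist P (2 * k) q)) :
    NoisySample P' k' K ε' ∧ ∀ p ∈ P', ε' / c ≤ kdist P' k' p :=
  resample_preserves_sampling_general P k k' hk'k hkP K hKne ε2k ε' c hweak1 hweak3 hkp1 hkp3 Q hQ
    P' hP'
end
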